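/- Let ℓ ≥ 1 and k ≥ 2, and suppose every (k−1)-vertex-critical (P_2 + ℓP_1)-free graph has at most f vertices. Then every k-vertex-critical (P_2 + ℓP_1)-free graph G with a maximum independent set S of size at least ℓ+1 satisfies |S| ≤ (ℓ−1)·f. -/

import Mathlib

/-!
Deleting the independent set `S` costs at most one colour, so `G - S` contains an induced
`(k-1)`-vertex-critical subgraph `G[W]`, and `|W| ≤ f`. By maximality every vertex outside `S`
has a neighbour in `S`, so `ℓ` non-neighbours in `S` would complete an induced `P₂ + ℓP₁`: each
vertex of `W` misses at most `ℓ - 1` vertices of `S`. No `s ∈ S` is adjacent to all of `W`,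
since `G[W ∪ {s}]` would then be `k`-chromatic while missing another vertex of `S`, against the
criticality of `G`. Hence `S` is covered by the non-neighbourhoods of the vertices of `W`.
-/

open SimpleGraph

/-- `G` is `k`-vertex-critical: `χ(G) = k` and deleting any vertex decreases `χ`. -/
def IsKVertexCritical {V : Type*} (G : SimpleGraph V) (k : ℕ) : Prop :=
  G.chromaticNumber = k ∧ ∀ v : V, (G.induce ({v}ᶜ : Set V)).chromaticNumber < k

/-- `G` has no induced subgraph isomorphic to `H`. -/
def InducedFree {V W : Type*} (G : SimpleGraph V) (H : SimpleGraph W) : Prop :=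
  ∀ s : Set V, IsEmpty (G.induce s ≃g H)

/-- `s` is an independent set of `G`. -/
def IsIndepSet {V : Type*} (G : SimpleGraph V) (s : Set V) : Prop :=
  s.Pairwise fun a b => ¬ G.Adj a b

/-- The graph `P_2 + ℓ P_1`: an edge together with `ℓ` isolated vertices. -/
def P2lP1 (ℓ : ℕ) : SimpleGraph (Fin (ℓ + 2)) := fromEdgeSet {s(0, 1)}

/-- The graph `P_3 + P_1`: a path on three vertices plus an isolated vertex. -/
def P3P1 : SimpleGraph (Fin 4) := fromEdgeSet {s(0, 1), s(1, 2)}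

/-- The paw: a triangle with a pendant vertex. -/
def paw : SimpleGraph (Fin 4) := fromEdgeSet {s(0, 1), s(0, 2), s(1, 2), s(2, 3)}

/-- The join of two graphs: all edges between the two sides are added. -/
def joinG {α β : Type*} (G : SimpleGraph α) (H : SimpleGraph β) : SimpleGraph (α ⊕ β) where
  Adj x y :=
    match x, y with
    | Sum.inl a, Sum.inl b => G.Adj a b
    | Sum.inr a, Sum.inr b => H.Adj a b
    | Sum.inl _, Sum.inr _ => True
    | Sum.inr _, Sum.inl _ => True
  symm := ⟨by
    rintro (a | a) (b | b) h
    · exact G.adj_symm h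
    · trivial
    · trivial
    · exact H.adj_symm h⟩
  loopless := ⟨by
    rintro (a | a) h
    · exact G.irrefl h
    · exact H.irrefl h⟩

namespace SimpleGraph

variable {V : Type*} {G : SimpleGraph V} {n : ℕ}

theorem IsIndepSet.colorable_add_one {S : Set V} (hS : G.IsIndepSet S)
    (h : (G.induce Sᶜ).Colorable n) : G.Colorable (n + 1) := by
  classical
  obtain ⟨C⟩ := h
  let C' : G.Coloring (Option (Fin n)) := Coloring.mk
    (fun v => if hv : v ∈ S then none else some (C ⟨v, hv⟩)) (by
      intro v w hvw
      by_cases hv : v ∈ S <;> by_cases hw : w ∈ S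
      · exact absurd hvw (hS hv hw (G.ne_of_adj hvw))
      · simp [hv, hw]
      · simp [hv, hw]
      · simpa [hv, hw] using C.valid (show (G.induce Sᶜ).Adj ⟨v, hv⟩ ⟨w, hw⟩ from hvw))
  simpa using C'.colorable

theorem not_colorable_induce_insert {W : Set V} {s : V} (hs : ∀ w ∈ W, G.Adj s w)
    (hW : ¬ (G.induce W).Colorable n) : ¬ (G.induce (insert s W)).Colorable (n + 1) := by
  rintro ⟨C⟩
  let c := C ⟨s, W.mem_insert s⟩
  let C' : (G.induce W).Coloring {a // a ≠ c} := Coloring.mk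
    (fun w => ⟨C ⟨w, W.mem_insert_of_mem s w.2⟩,
      (C.valid (show (G.induce (insert s W)).Adj _ ⟨s, W.mem_insert s⟩ from
        (hs w w.2).symm))⟩)
    (fun {a b} hab h => C.valid (show (G.induce (insert s W)).Adj
      ⟨a, W.mem_insert_of_mem s a.2⟩ ⟨b, W.mem_insert_of_mem s b.2⟩ from hab)
      (congrArg Subtype.val h))
  exact hW (by simpa [Fintype.card_subtype_compl] using C'.colorable)

theorem exists_adj_of_notMem_of_forall_ncard_le [Finite V] {S : Set V} (hS : G.IsIndepSet S)
    (hmax : ∀ T : Set V, G.IsIndepSet T → T.ncard ≤ S.ncard) {x : V} (hx : x ∉ S) :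
    ∃ s ∈ S, G.Adj x s := by
  by_contra! hxS
  have hins : G.IsIndepSet (insert x S) := by
    rw [← isClique_compl, isClique_insert]
    exact ⟨(isClique_compl G).2 hS, fun b hb hxb => (compl_adj G x b).2 ⟨hxb, hxS b hb⟩⟩
  have := hmax _ hins
  rw [Set.ncard_insert_of_notMem hx] at this
  omega

end SimpleGraph

section Critical

variable {V : Type*} {G : SimpleGraph V} {n : ℕ}

theorem isKVertexCritical_add_one_iff :
    IsKVertexCritical G (n + 1) ↔ ¬ G.Colorable n ∧ ∀ v, (G.induce {v}ᶜ).Colorable n := by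
  simp only [IsKVertexCritical, Nat.cast_add_one, chromaticNumber_eq_iff_colorable_not_colorable,
    ENat.lt_add_one_iff (ENat.natCast_ne_top n), chromaticNumber_le_iff_colorable]
  refine ⟨fun ⟨⟨_, h⟩, hdel⟩ => ⟨h, hdel⟩, fun ⟨h, hdel⟩ => ⟨⟨?_, h⟩, hdel⟩⟩
  obtain ⟨v⟩ : Nonempty V := not_isEmpty_iff.1 fun _ => h (.of_isEmpty n)
  exact IsIndepSet.colorable_add_one (Set.pairwise_singleton v _) (hdel v)

theorem IsKVertexCritical.colorable_induce_of_notMem (hG : IsKVertexCritical G (n + 1))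
    {U : Set V} {t : V} (ht : t ∉ U) : (G.induce U).Colorable n :=
  ((isKVertexCritical_add_one_iff.1 hG).2 t).of_hom
    (G.induceHomOfLE fun u hu (hut : u = t) => ht (hut ▸ hu)).toHom

theorem exists_isKVertexCritical_induce_subset [Finite V] {U : Set V}
    (hU : ¬ (G.induce U).Colorable n) : ∃ W ⊆ U, IsKVertexCritical (G.induce W) (n + 1) := by
  obtain ⟨W, hWU, hW, hWmin⟩ :=
    exists_minimal_le_of_wellFoundedLT (fun W : Set V => ¬ (G.induce W).Colorable n) U hU
  refine ⟨W, hWU, isKVertexCritical_add_one_iff.2 ⟨hW, fun v => ?_⟩⟩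
  have hdel : (G.induce (W \ {v.1})).Colorable n := by
    by_contra h
    exact (hWmin h Set.sdiff_subset v.2).2 rfl
  exact hdel.of_hom ⟨fun a => ⟨a.1, a.1.2, fun h => a.2 (Subtype.ext h)⟩, id⟩

end Critical

section InducedFree

variable {V W : Type*} {G : SimpleGraph V} {H : SimpleGraph W}

theorem inducedFree_iff_not_isIndContained : InducedFree G H ↔ ¬ H ⊴ G := by
  rw [isIndContained_iff_exists_iso_induce, InducedFree, not_exists]
  exact forall_congr' fun s => ⟨fun ⟨h⟩ ⟨e⟩ => h e.symm, fun h => ⟨fun e => h ⟨e.symm⟩⟩⟩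

theorem InducedFree.induce (h : InducedFree G H) (U : Set V) : InducedFree (G.induce U) H := by
  rw [inducedFree_iff_not_isIndContained] at h ⊢
  exact fun hU => h (hU.trans ⟨Embedding.induce U⟩)

end InducedFree

theorem P2lP1_adj {ℓ : ℕ} {i j : Fin (ℓ + 2)} :
    (P2lP1 ℓ).Adj i j ↔ i = 0 ∧ j = 1 ∨ i = 1 ∧ j = 0 := by
  rw [P2lP1, fromEdgeSet_adj, Set.mem_singleton_iff, Sym2.eq_iff, and_iff_left_iff_imp]
  rintro (⟨rfl, rfl⟩ | ⟨rfl, rfl⟩) <;> simp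

theorem P2lP1_isIndContained {V : Type*} {G : SimpleGraph V} {ℓ : ℕ} {x w : V} {u : Fin ℓ → V}
    (hxw : G.Adj x w) (hu : Function.Injective u) (hxu : ∀ i, ¬ G.Adj x (u i))
    (hwu : ∀ i, ¬ G.Adj w (u i)) (huu : ∀ i j, ¬ G.Adj (u i) (u j)) : P2lP1 ℓ ⊴ G := by
  have hux i : ¬ G.Adj (u i) x := fun h => hxu i h.symm
  have huw i : ¬ G.Adj (u i) w := fun h => hwu i h.symm
  have hinj : Function.Injective (Fin.cons x (Fin.cons w u : Fin (ℓ + 1) → V)) := by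
    refine Fin.cons_injective_iff.2 ⟨?_, Fin.cons_injective_iff.2 ⟨?_, hu⟩⟩
    · rintro ⟨i, hi⟩
      refine Fin.cases (fun h => G.ne_of_adj hxw h.symm) (fun i (h : u i = x) => ?_) i hi
      exact huw i (by rw [h]; exact hxw)
    · rintro ⟨i, rfl⟩
      exact hxu i hxw
  refine isIndContained_iff_exists_comap_eq.2 ⟨⟨_, hinj⟩, ?_⟩
  ext i j
  simp only [comap_adj, Function.Embedding.coeFn_mk, P2lP1_adj]
  refine Fin.cases ?_ (Fin.cases ?_ fun i => ?_) i <;>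
    refine Fin.cases ?_ (Fin.cases ?_ fun j => ?_) j <;>
    simp [hxw, hxw.symm, hxu, hwu, hux, huw, huu, Fin.ext_iff]

theorem Set.ncard_le_ncard_mul_of_forall_exists {α β : Type*} {r : α → β → Prop} {s : Set α}
    {t : Set β} {n : ℕ} (hs : s.Finite) (ht : t.Finite) (hst : ∀ a ∈ s, ∃ b ∈ t, r a b)
    (hn : ∀ b ∈ t, {a ∈ s | r a b}.ncard ≤ n) : s.ncard ≤ t.ncard * n := by
  classical
  lift s to Finset α using hs
  lift t to Finset β using ht
  simp only [Set.ncard_coe_finset, Finset.mem_coe] at hst hn ⊢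
  simpa using Finset.card_mul_le_card_mul r (m := 1)
    (fun a ha => Finset.card_pos.2 (by simpa [Finset.Nonempty] using hst a ha))
    (fun b hb => by simpa [← Set.ncard_coe_finset] using hn b hb)

theorem InducedFree.ncard_setOf_not_adj_lt {V : Type*} [Finite V] {G : SimpleGraph V} {ℓ : ℕ}
    (hfree : InducedFree G (P2lP1 ℓ)) {S : Set V} (hS : G.IsIndepSet S)
    (hmax : ∀ T : Set V, G.IsIndepSet T → T.ncard ≤ S.ncard) {x : V} (hx : x ∉ S) :
    {s ∈ S | ¬ G.Adj x s}.ncard < ℓ := by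
  classical
  have := Fintype.ofFinite V
  obtain ⟨w, hwS, hxw⟩ := exists_adj_of_notMem_of_forall_ncard_le hS hmax hx
  by_contra! hle
  obtain ⟨e⟩ : Nonempty (Fin ℓ ↪ {s ∈ S | ¬ G.Adj x s}) :=
    Function.Embedding.nonempty_of_card_le
      (by rwa [Fintype.card_fin, ← Nat.card_eq_fintype_card, Nat.card_coe_set_eq])
  have hSS {a b : V} (ha : a ∈ S) (hb : b ∈ S) : ¬ G.Adj a b := fun h => hS ha hb (G.ne_of_adj h) h
  exact inducedFree_iff_not_isIndContained.1 hfree <|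
    P2lP1_isIndContained hxw (Subtype.val_injective.comp e.injective) (fun i => (e i).2.2)
      (fun i => hSS hwS (e i).2.1) (fun i j => hSS (e i).2.1 (e j).2.1)

theorem max_indep_set_bound_P2lP1_free (ℓ k f : ℕ) (hℓ : 1 ≤ ℓ) (hk : 2 ≤ k)
    (hbound : ∀ (W : Type) [Fintype W] (H : SimpleGraph W),
      IsKVertexCritical H (k - 1) → InducedFree H (P2lP1 ℓ) → Fintype.card W ≤ f)
    {V : Type} [Fintype V] (G : SimpleGraph V)
    (hcrit : IsKVertexCritical G k) (hfree : InducedFree G (P2lP1 ℓ))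
    (S : Set V) (hS : _root_.IsIndepSet G S)
    (hmax : ∀ T : Set V, _root_.IsIndepSet G T → T.ncard ≤ S.ncard)
    (hcard : ℓ + 1 ≤ S.ncard) :
    S.ncard ≤ (ℓ - 1) * f := by
  classical
  obtain ⟨n, rfl⟩ : ∃ n, k = n + 2 := ⟨k - 2, by omega⟩
  obtain ⟨W, hWS, hW⟩ := exists_isKVertexCritical_induce_subset (U := Sᶜ)
    fun h => (isKVertexCritical_add_one_iff.1 hcrit).1 (IsIndepSet.colorable_add_one hS h)
  have hWf : W.ncard ≤ f := by
    have := hbound W (G.induce W) hW (hfree.induce W)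
    rwa [← Nat.card_eq_fintype_card, Nat.card_coe_set_eq] at this
  have hdom : ∀ s, ∃ x ∈ W, ¬ G.Adj x s := by
    intro s
    by_contra! hsW
    obtain ⟨t, htS, hts⟩ := Set.exists_ne_of_one_lt_ncard (s := S) (by omega) s
    refine not_colorable_induce_insert (fun x hx => (hsW x hx).symm)
      (isKVertexCritical_add_one_iff.1 hW).1 (hcrit.colorable_induce_of_notMem (t := t) ?_)
    rintro (rfl | htW)
    exacts [hts rfl, hWS htW htS]
  calc S.ncard ≤ W.ncard * (ℓ - 1) :=
        Set.ncard_le_ncard_mul_of_forall_exists S.toFinite W.toFinite (fun s _ => hdom s) fun x hx =>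
          Nat.le_sub_one_of_lt (hfree.ncard_setOf_not_adj_lt hS hmax (hWS hx))
    _ ≤ (ℓ - 1) * f := by rw [mul_comm]; exact Nat.mul_le_mul_left _ hWf
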